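/- arXiv:1409.2536 — 2 statements merged into one kernel-verified Lean document; each statement's English description precedes it below -/
import Mathlib

section
/- Let W be a classical–quantum channel from a finite alphabet X with |X| = a into the density operators on ℂ^d, and P a probability distribution on X. For every x^n ∈ X^n of type P and every δ > 0, Tr(W_{x^n} · Π^n_{PW, δ√a}) ≥ 1 − ad/δ², where Π^n_{PW, δ√a} is the variance-typical projector (with respect to a fixed diagonalization of the average state PW = Σ_x P(x)W_x) with constant δ√a. -/
/-!
With `p x j = Tr(W_x π_j)`, the trace `Tr(W_{x^n} Π)` is the probability that independent
letters `J_i ~ p (x_i) ·` form a sequence that is variance-typical for `q`. Because `x^n` has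
type `P`, the count `N(j|J^n)` has mean `n q_j`, and its variance `Σ_i p(1 - p)` is at most
`n q_j (1 - q_j)` by concavity of `t ↦ t (1 - t)`. Chebyshev's inequality bounds each atypical
event by `1/(δ² a)`, and the union bound over the `d` letters gives `d/(δ² a) ≤ a d/δ²`.
-/

open Matrix BigOperators Finset
open scoped Classical ComplexOrder

noncomputable section

/-- Square complex matrices of size `d` (operators on `ℂ^d`). -/
abbrev Mat (d : ℕ) := Matrix (Fin d) (Fin d) ℂ

/-- Operators on the `n`-fold tensor power `(ℂ^d)^{⊗n}`, indexed by `Fin n → Fin d`. -/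
abbrev MatPow (d n : ℕ) := Matrix (Fin n → Fin d) (Fin n → Fin d) ℂ

/-- Tensor product `A 0 ⊗ A 1 ⊗ ⋯ ⊗ A (n-1)` of a family of `d × d` matrices. -/
def tensorPow {d n : ℕ} (A : Fin n → Mat d) : MatPow d n :=
  Matrix.of fun j k => ∏ i, A i (j i) (k i)

/-- Exponential to base 2. -/
def exp2 (t : ℝ) : ℝ := (2 : ℝ) ^ t

/-- `P` is a probability distribution on the finite set `X`. -/
def IsProbDist {X : Type*} [Fintype X] (P : X → ℝ) : Prop :=
  (∀ x, 0 ≤ P x) ∧ ∑ x, P x = 1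

/-- `ρ` is a density operator (a state): positive semidefinite with trace one. -/
def IsState {ι : Type*} [Fintype ι] [DecidableEq ι] (ρ : Matrix ι ι ℂ) : Prop :=
  ρ.PosSemidef ∧ ρ.trace = 1

/-- `N(x|x^n)`: number of occurrences of the letter `x` in the sequence `xs`. -/
def countIn {X : Type*} {n : ℕ} (x : X) (xs : Fin n → X) : ℕ :=
  (Finset.univ.filter fun i => xs i = x).card

/-- The variance-typical set `T^n_{P,δ}`. -/
def typicalSet {X : Type*} [Fintype X] (n : ℕ) (P : X → ℝ) (δ : ℝ) :
    Finset (Fin n → X) :=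
  Finset.univ.filter fun xs => ∀ x : X,
    |(countIn x xs : ℝ) - n * P x| ≤ δ * Real.sqrt n * Real.sqrt (P x * (1 - P x))

/-- Product (i.i.d.) probability `P^{⊗n}(A)` of a set `A` of sequences. -/
def prodProb {X : Type*} [Fintype X] {n : ℕ} (P : X → ℝ) (A : Finset (Fin n → X)) : ℝ :=
  ∑ xs ∈ A, ∏ i, P (xs i)

/-- Shannon entropy to base 2. -/
def shannonEntropy {X : Type*} [Fintype X] (P : X → ℝ) : ℝ :=
  -∑ x, P x * Real.logb 2 (P x)

/-- von Neumann entropy to base 2, `H(ρ) = -Tr(ρ log₂ ρ)`, via the eigenvalues. -/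
def vnEntropy {d : ℕ} (ρ : Mat d) : ℝ :=
  if h : ρ.IsHermitian then -∑ i, h.eigenvalues i * Real.logb 2 (h.eigenvalues i) else 0

/-- The constant `K = 2 log₂(e) / e`. -/
def Kconst : ℝ := 2 * Real.logb 2 (Real.exp 1) / Real.exp 1

/-- A diagonalization `ρ = Σ_j R j • π j` into one-dimensional mutually orthogonal
eigenprojectors, with eigenvalue list `R` a probability distribution. -/
def IsDiagonalization {d : ℕ} (ρ : Mat d) (R : Fin d → ℝ) (π : Fin d → Mat d) : Prop :=
  (∀ j, (π j).PosSemidef) ∧ (∀ j, π j * π j = π j) ∧ (∀ j, (π j).trace = 1) ∧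
    (∀ j k, j ≠ k → π j * π k = 0) ∧ (∑ j, π j = 1) ∧
    ρ = ∑ j, (R j : ℂ) • π j ∧ IsProbDist R

/-- The variance-typical projector `Π^n_{ρ,δ}` of a state with fixed diagonalization
`(R, π)`. -/
def typicalProj {d : ℕ} (n : ℕ) (R : Fin d → ℝ) (π : Fin d → Mat d) (δ : ℝ) : MatPow d n :=
  ∑ js ∈ typicalSet n R δ, tensorPow fun i => π (js i)

/-- `B` is an `η`-shadow of the state `σ`: `0 ≤ B ≤ 1` and `Tr(σB) ≥ η`. -/
def IsShadow {ι : Type*} [Fintype ι] [DecidableEq ι] (σ B : Matrix ι ι ℂ) (η : ℝ) : Prop :=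
  B.PosSemidef ∧ ((1 : Matrix ι ι ℂ) - B).PosSemidef ∧ η ≤ (Matrix.trace (σ * B)).re

/-- Average state `PW = Σ_x P(x) W_x` of a cq-channel under input distribution `P`. -/
def avgState {X : Type*} [Fintype X] {d : ℕ} (P : X → ℝ) (W : X → Mat d) : Mat d :=
  ∑ x, (P x : ℂ) • W x

/-- Conditional von Neumann entropy `H(W|P) = Σ_x P(x) H(W_x)`. -/
def condEntropy {X : Type*} [Fintype X] {d : ℕ} (P : X → ℝ) (W : X → Mat d) : ℝ :=
  ∑ x, P x * vnEntropy (W x)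

/-- Mutual information `I(P;W) = H(PW) − H(W|P)`. -/
def mutualInfo {X : Type*} [Fintype X] {d : ℕ} (P : X → ℝ) (W : X → Mat d) : ℝ :=
  vnEntropy (avgState P W) - condEntropy P W

/-- Capacity `C(W) = max_P I(P;W)`. -/
def capacity {X : Type*} [Fintype X] {d : ℕ} (W : X → Mat d) : ℝ :=
  sSup {c | ∃ P : X → ℝ, IsProbDist P ∧ c = mutualInfo P W}

/-- `(f, D)` (with message set `M` inside the outcome index set `M'`) is an
`(n,λ)`-code for the cq-channel `W`: the `D m` are positive semidefinite, sum to the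
identity, and each message is decoded correctly with probability at least `1 - λ`. -/
def IsCode {X : Type*} [Fintype X] {d n : ℕ} (W : X → Mat d) (lam : ℝ)
    {M' : Type*} [Fintype M'] (M : Finset M') (f : M' → Fin n → X)
    (D : M' → MatPow d n) : Prop :=
  (∀ m, (D m).PosSemidef) ∧ (∑ m, D m = 1) ∧
    ∀ m ∈ M, 1 - lam ≤ (Matrix.trace (tensorPow (fun i => W (f m i)) * D m)).re

/-- `N(n,λ)`: maximal size of an `(n,λ)`-code for `W`. -/
def maxCodeSize {X : Type*} [Fintype X] (d : ℕ) (W : X → Mat d) (n : ℕ) (lam : ℝ) : ℕ :=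
  sSup {k | ∃ (M' : Type) (_ : Fintype M') (M : Finset M') (f : M' → Fin n → X)
    (D : M' → MatPow d n), IsCode W lam M f D ∧ M.card = k}

/-- Trace norm `‖A‖₁ = Tr|A|`: the sum of the singular values. -/
def traceNorm {ι : Type*} [Fintype ι] [DecidableEq ι] (A : Matrix ι ι ℂ) : ℝ :=
  ∑ i, Real.sqrt ((Matrix.posSemidef_conjTranspose_mul_self A).1.eigenvalues i)

/-- Trace distance `D(ρ,σ) = ½‖ρ−σ‖₁`. -/
def traceDist {ι : Type*} [Fintype ι] [DecidableEq ι] (ρ σ : Matrix ι ι ℂ) : ℝ :=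
  traceNorm (ρ - σ) / 2

/-- (Pure-state) fidelity `F(ρ,σ) = Tr(ρσ)`. -/
def fidelity {ι : Type*} [Fintype ι] [DecidableEq ι] (ρ σ : Matrix ι ι ℂ) : ℝ :=
  (Matrix.trace (ρ * σ)).re

/-- A pure state: the rank-one orthogonal projector `|ψ⟩⟨ψ|` onto the span of a
unit vector `ψ`. -/
def IsPureState {ι : Type*} [Fintype ι] (ρ : Matrix ι ι ℂ) : Prop :=
  ∃ ψ : ι → ℂ, (∑ i, star (ψ i) * ψ i) = 1 ∧ ρ = Matrix.vecMulVec ψ (star ψ)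

/-- The set of eigenvalue-index sequences `js` that are variance-typical, with
constant `δ`, for the distribution `q x` on each block `I_x = {i : xs i = x}`. -/
def condTypicalSet {X : Type*} [Fintype X] {n d : ℕ} (xs : Fin n → X)
    (q : X → Fin d → ℝ) (δ : ℝ) : Finset (Fin n → Fin d) :=
  Finset.univ.filter fun js => ∀ (x : X) (k : Fin d),
    |((Finset.univ.filter fun i => xs i = x ∧ js i = k).card : ℝ) - (countIn x xs : ℝ) * q x k|
      ≤ δ * Real.sqrt (countIn x xs) * Real.sqrt (q x k * (1 - q x k))

/-- Conditional variance-typical projector `Π^n_{W,δ}(x^n) = ⊗_{x∈X} Π^{I_x}_{W_x,δ}`,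
with respect to fixed diagonalizations `W_x = Σ_j (q x j) • (π x j)`. -/
def condTypicalProj {X : Type*} [Fintype X] {d : ℕ} {n : ℕ} (xs : Fin n → X)
    (q : X → Fin d → ℝ) (π : X → Fin d → Mat d) (δ : ℝ) : MatPow d n :=
  ∑ js ∈ condTypicalSet xs q δ, tensorPow fun i => π (xs i) (js i)

section ProductWeight

variable {ι κ : Type*} [Fintype ι] [DecidableEq ι] [Fintype κ]

theorem sum_prod_mul_prod (p g : ι → κ → ℝ) :
    ∑ js : ι → κ, (∏ i, p i (js i)) * ∏ i, g i (js i) = ∏ i, ∑ v, p i v * g i v := by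
  simp_rw [← prod_mul_distrib]
  exact (Fintype.prod_sum fun i v => p i v * g i v).symm

variable {p : ι → κ → ℝ}

theorem sum_prod_eq_one (hp : ∀ i, ∑ v, p i v = 1) : ∑ js : ι → κ, ∏ i, p i (js i) = 1 := by
  rw [← Fintype.prod_sum p]
  simp [hp]

theorem sum_prod_mul_prod_finset (hp : ∀ i, ∑ v, p i v = 1) (S : Finset ι) (g : ι → κ → ℝ) :
    ∑ js : ι → κ, (∏ i, p i (js i)) * ∏ i ∈ S, g i (js i) = ∏ i ∈ S, ∑ v, p i v * g i v := by
  have hfactor : ∀ i, ∑ v, p i v * (if i ∈ S then g i v else 1)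
      = if i ∈ S then ∑ v, p i v * g i v else 1 := by
    intro i
    split_ifs
    · rfl
    · simp [hp]
  have := sum_prod_mul_prod p fun i v => if i ∈ S then g i v else 1
  rw [Fintype.prod_congr _ _ hfactor] at this
  simpa only [prod_ite_mem, univ_inter] using this

theorem sum_prod_mul_sq_sum (hp : ∀ i, ∑ v, p i v = 1) (Y : ι → κ → ℝ)
    (hY : ∀ i, ∑ v, p i v * Y i v = 0) :
    ∑ js : ι → κ, (∏ i, p i (js i)) * (∑ i, Y i (js i)) ^ 2
      = ∑ i, ∑ v, p i v * Y i v ^ 2 := by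
  have hcov : ∀ i k, ∑ js : ι → κ, (∏ l, p l (js l)) * (Y i (js i) * Y k (js k))
      = if i = k then ∑ v, p i v * (Y i v * Y i v) else 0 := by
    intro i k
    split_ifs with hik
    · subst hik
      simpa using sum_prod_mul_prod_finset hp {i} fun _ v => Y i v * Y i v
    · simpa [prod_pair hik, hY] using sum_prod_mul_prod_finset hp {i, k} Y
  simp_rw [sq, sum_mul_sum, mul_sum]
  rw [sum_comm]
  refine sum_congr rfl fun i _ => ?_
  rw [sum_comm]
  simp [hcov]

end ProductWeight

theorem sum_prod_mul_sq_countIn_sub {n : ℕ} {κ : Type*} [Fintype κ]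
    {p : Fin n → κ → ℝ} (hp : ∀ i, ∑ v, p i v = 1) (j : κ) :
    ∑ js : Fin n → κ, (∏ i, p i (js i)) * ((countIn j js : ℝ) - ∑ i, p i j) ^ 2
      = ∑ i, p i j * (1 - p i j) := by
  set Y : Fin n → κ → ℝ := fun i v => (if v = j then 1 else 0) - p i j
  have hcount : ∀ js : Fin n → κ, (countIn j js : ℝ) - ∑ i, p i j = ∑ i, Y i (js i) := by
    intro js
    rw [countIn, natCast_card_filter, ← sum_sub_distrib]
  have hmean : ∀ i, ∑ v, p i v * Y i v = 0 := by
    intro i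
    simp [Y, mul_sub, sum_sub_distrib, ← sum_mul, hp]
  have hvar : ∀ i, ∑ v, p i v * Y i v ^ 2 = p i j * (1 - p i j) := by
    intro i
    have hsplit : ∀ v, p i v * Y i v ^ 2
        = (if v = j then p i v * (1 - 2 * p i j) else 0) + p i v * p i j ^ 2 := by
      intro v
      by_cases hv : v = j
      · simp [Y, hv]
        ring
      · simp [Y, hv]
    simp only [hsplit, sum_add_distrib, sum_ite_eq', mem_univ, if_true, ← sum_mul, hp]
    ring
  simp_rw [hcount, sum_prod_mul_sq_sum hp Y hmean, hvar]

theorem sum_mul_one_sub_le_card_mul {ι : Type*} (s : Finset ι) (f : ι → ℝ) (m : ℝ)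
    (hm : ∑ i ∈ s, f i = #s * m) :
    ∑ i ∈ s, f i * (1 - f i) ≤ #s * (m * (1 - m)) := by
  have hdev : ∑ i ∈ s, f i * (1 - f i) + ∑ i ∈ s, (f i - m) ^ 2 = #s * (m * (1 - m)) := by
    rw [← sum_add_distrib]
    calc ∑ i ∈ s, (f i * (1 - f i) + (f i - m) ^ 2)
        = ∑ i ∈ s, ((1 - 2 * m) * f i + m ^ 2) := sum_congr rfl fun i _ => by ring
      _ = #s * (m * (1 - m)) := by
        rw [sum_add_distrib, ← mul_sum, hm, sum_const, nsmul_eq_mul]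
        ring
  linarith [sum_nonneg fun i (_ : i ∈ s) => sq_nonneg (f i - m)]

theorem sum_filter_lt_abs_sub_le {ι : Type*} (s : Finset ι) {μ f : ι → ℝ} {m V ε : ℝ}
    (hμ : ∀ i ∈ s, 0 ≤ μ i) (hε : 0 < ε) (hV : ∑ i ∈ s, μ i * (f i - m) ^ 2 ≤ V) :
    ∑ i ∈ s with ε * √V < |f i - m|, μ i ≤ 1 / ε ^ 2 := by
  have hterm : ∀ i ∈ s, 0 ≤ μ i * (f i - m) ^ 2 := fun i hi => mul_nonneg (hμ i hi) (sq_nonneg _)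
  have htail : ∑ i ∈ s with ε * √V < |f i - m|, μ i * (f i - m) ^ 2 ≤ V :=
    (sum_le_sum_of_subset_of_nonneg (filter_subset _ s) fun i hi _ => hterm i hi).trans hV
  rcases le_or_gt V 0 with hV0 | hV0
  · have hzero : ∀ i ∈ s, μ i * (f i - m) ^ 2 = 0 :=
      (sum_eq_zero_iff_of_nonneg hterm).mp (le_antisymm (hV.trans hV0) (sum_nonneg hterm))
    rw [sum_eq_zero fun i hi => ?_]
    · positivity
    rw [mem_filter, Real.sqrt_eq_zero'.mpr hV0, mul_zero, abs_pos] at hi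
    simpa [sub_eq_zero, hi.2] using hzero i hi.1
  · have hlow : (∑ i ∈ s with ε * √V < |f i - m|, μ i) * (ε ^ 2 * V)
        ≤ ∑ i ∈ s with ε * √V < |f i - m|, μ i * (f i - m) ^ 2 := by
      rw [sum_mul]
      refine sum_le_sum fun i hi => ?_
      rw [mem_filter] at hi
      have : (ε * √V) ^ 2 ≤ (f i - m) ^ 2 := by
        rw [← sq_abs (f i - m)]
        exact pow_le_pow_left₀ (by positivity) hi.2.le 2
      rw [mul_pow, Real.sq_sqrt hV0.le] at this
      exact mul_le_mul_of_nonneg_left this (hμ i hi.1)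
    rw [le_div_iff₀ (by positivity)]
    nlinarith

theorem sum_filter_not_forall_le {ι κ : Type*} [Fintype κ] (s : Finset ι) {μ : ι → ℝ}
    (hμ : ∀ i ∈ s, 0 ≤ μ i) (B : κ → ι → Prop) :
    ∑ i ∈ s with ¬ ∀ j, B j i, μ i ≤ ∑ j, ∑ i ∈ s with ¬ B j i, μ i := by
  simp_rw [sum_filter]
  rw [sum_comm]
  refine sum_le_sum fun i hi => ?_
  split_ifs with hall
  · exact sum_nonneg fun j _ => by split_ifs <;> simp [hμ i hi]
  · obtain ⟨j, hj⟩ := not_forall.mp hall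
    calc μ i = if ¬ B j i then μ i else 0 := by rw [if_pos hj]
      _ ≤ ∑ j, if ¬ B j i then μ i else 0 :=
        single_le_sum (f := fun j => if ¬ B j i then μ i else 0)
          (fun j _ => by split_ifs <;> simp [hμ i hi]) (mem_univ j)

theorem one_sub_div_sq_le_sum_typicalSet {n : ℕ} {κ : Type*} [Fintype κ]
    {p : Fin n → κ → ℝ} (hp0 : ∀ i v, 0 ≤ p i v) (hp1 : ∀ i, ∑ v, p i v = 1)
    {q : κ → ℝ} (hmean : ∀ j, ∑ i, p i j = n * q j) {ε : ℝ} (hε : 0 < ε) :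
    1 - Fintype.card κ / ε ^ 2 ≤ ∑ js ∈ typicalSet n q ε, ∏ i, p i (js i) := by
  set typical : κ → (Fin n → κ) → Prop := fun j js =>
    |(countIn j js : ℝ) - n * q j| ≤ ε * √n * √(q j * (1 - q j))
  have hμ : ∀ js ∈ (univ : Finset (Fin n → κ)), 0 ≤ ∏ i, p i (js i) :=
    fun js _ => prod_nonneg fun i _ => hp0 i (js i)
  have hatypical : ∀ j, ∑ js with ¬ typical j js, ∏ i, p i (js i) ≤ 1 / ε ^ 2 := by
    intro j
    have hvar : ∑ js : Fin n → κ, (∏ i, p i (js i)) * ((countIn j js : ℝ) - n * q j) ^ 2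
        ≤ n * (q j * (1 - q j)) := by
      rw [← hmean j, sum_prod_mul_sq_countIn_sub hp1 j]
      simpa using sum_mul_one_sub_le_card_mul univ (fun i => p i j) (q j) (by simpa using hmean j)
    simp_rw [typical, not_le, mul_assoc ε, ← Real.sqrt_mul (Nat.cast_nonneg n)]
    exact sum_filter_lt_abs_sub_le univ hμ hε hvar
  have hunion := (sum_filter_not_forall_le univ hμ typical).trans
    (sum_le_sum fun j _ => hatypical j)
  have htotal := sum_filter_add_sum_filter_not univ (fun js => ∀ j, typical j js)
    fun js => ∏ i, p i (js i)
  rw [sum_prod_eq_one hp1] at htotal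
  simp only [sum_const, card_univ, nsmul_eq_mul, mul_one_div] at hunion
  rw [typicalSet]
  linarith

theorem Matrix.PosSemidef.trace_mul_nonneg_of_isIdempotentElem {ι : Type*} [Fintype ι]
    {ρ Q : Matrix ι ι ℂ} (hρ : ρ.PosSemidef) (hQ : Q.IsHermitian)
    (hQQ : IsIdempotentElem Q) : 0 ≤ (ρ * Q).trace := by
  have := (hρ.mul_mul_conjTranspose_same Q).trace_nonneg
  rwa [hQ.eq, trace_mul_comm, ← mul_assoc, hQQ.eq, trace_mul_comm] at this

namespace IsDiagonalization

variable {d : ℕ} {ρ σ : Mat d} {R : Fin d → ℝ} {π : Fin d → Mat d}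

theorem trace_mul_proj (h : IsDiagonalization ρ R π) (j : Fin d) : (ρ * π j).trace = R j := by
  obtain ⟨-, hidem, htr, horth, -, hρ, -⟩ := h
  rw [hρ, sum_mul, trace_sum, sum_eq_single j]
  · simp [hidem, htr]
  · intro k _ hk
    simp [horth k j hk]
  · simp

theorem trace_mul_proj_nonneg (h : IsDiagonalization ρ R π) (hσ : σ.PosSemidef) (j : Fin d) :
    0 ≤ (σ * π j).trace :=
  hσ.trace_mul_nonneg_of_isIdempotentElem (h.1 j).isHermitian (h.2.1 j)

theorem trace_mul_proj_eq_re (h : IsDiagonalization ρ R π) (hσ : σ.PosSemidef) (j : Fin d) :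
    (σ * π j).trace = (σ * π j).trace.re :=
  Complex.eq_re_of_ofReal_le (r := 0) (by simpa using h.trace_mul_proj_nonneg hσ j)

theorem re_trace_mul_proj_nonneg (h : IsDiagonalization ρ R π) (hσ : σ.PosSemidef)
    (j : Fin d) : 0 ≤ (σ * π j).trace.re :=
  (Complex.nonneg_iff.mp (h.trace_mul_proj_nonneg hσ j)).1

theorem sum_re_trace_mul_proj (h : IsDiagonalization ρ R π) (hσ : σ.trace = 1) :
    ∑ j, (σ * π j).trace.re = 1 := by
  obtain ⟨-, -, -, -, hsum, -, -⟩ := h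
  rw [← Complex.re_sum, ← trace_sum, ← mul_sum, hsum, mul_one, hσ, Complex.one_re]

end IsDiagonalization

theorem trace_avgState_mul {X : Type*} [Fintype X] {d : ℕ} (P : X → ℝ) (W : X → Mat d)
    (A : Mat d) : (avgState P W * A).trace = ∑ x, (P x : ℂ) * (W x * A).trace := by
  simp [avgState, sum_mul, trace_sum]

theorem tensorPow_mul {d n : ℕ} (A B : Fin n → Mat d) :
    tensorPow A * tensorPow B = tensorPow fun i => A i * B i := by
  ext j k
  simp only [tensorPow, mul_apply, of_apply, ← prod_mul_distrib]
  exact (Fintype.prod_sum fun i v => A i (j i) v * B i v (k i)).symm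

theorem trace_tensorPow {d n : ℕ} (A : Fin n → Mat d) :
    (tensorPow A).trace = ∏ i, (A i).trace := by
  simp only [trace, Matrix.diag, tensorPow, of_apply]
  exact (Fintype.prod_sum fun i v => A i v v).symm

theorem trace_tensorPow_mul_typicalProj {d n : ℕ} (A : Fin n → Mat d) (R : Fin d → ℝ)
    (π : Fin d → Mat d) (δ : ℝ) :
    (tensorPow A * typicalProj n R π δ).trace
      = ∑ js ∈ typicalSet n R δ, ∏ i, (A i * π (js i)).trace := by
  simp [typicalProj, mul_sum, trace_sum, tensorPow_mul, trace_tensorPow]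

theorem sum_comp_eq_sum_countIn_mul {X : Type*} [Fintype X] {n : ℕ} (xs : Fin n → X)
    (f : X → ℝ) : ∑ i, f (xs i) = ∑ x, (countIn x xs : ℝ) * f x := by
  rw [← sum_fiberwise univ xs]
  refine sum_congr rfl fun x _ => ?_
  rw [sum_congr rfl fun i hi => by rw [(mem_filter.mp hi).2], sum_const, countIn, nsmul_eq_mul]

theorem weak_law_of_large_numbers_general {X : Type} [Fintype X] {d : ℕ}
    (W : X → Mat d) (hW : ∀ x, IsState (W x)) (P : X → ℝ)
    (q : Fin d → ℝ) (π : Fin d → Mat d) (hdiag : IsDiagonalization (avgState P W) q π)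
    (n : ℕ) (hn : 0 < n) (xs : Fin n → X)
    (htype : ∀ x, (countIn x xs : ℝ) = n * P x)
    (δ : ℝ) (hδ : 0 < δ) :
    1 - (Fintype.card X : ℝ) * d / δ ^ 2
      ≤ (Matrix.trace (tensorPow (fun i => W (xs i)) *
          typicalProj n q π (δ * Real.sqrt (Fintype.card X)))).re := by
  set p : X → Fin d → ℝ := fun x j => (W x * π j).trace.re
  have hp_eq : ∀ x j, (W x * π j).trace = p x j := fun x j =>
    hdiag.trace_mul_proj_eq_re (hW x).1 j
  have hq : ∀ j, ∑ x, P x * p x j = q j := fun j => by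
    have : ((q j : ℝ) : ℂ) = ∑ x, (P x : ℂ) * p x j := by
      rw [← hdiag.trace_mul_proj j, trace_avgState_mul]
      simp [hp_eq]
    exact_mod_cast this.symm
  have hmean : ∀ j, ∑ i, p (xs i) j = n * q j := fun j => by
    simp_rw [sum_comp_eq_sum_countIn_mul xs fun x => p x j, htype, mul_assoc, ← mul_sum, hq]
  have ha : (1 : ℝ) ≤ Fintype.card X :=
    Nat.one_le_cast.mpr (Fintype.card_pos_iff.mpr ⟨xs ⟨0, hn⟩⟩)
  have hlaw := one_sub_div_sq_le_sum_typicalSet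
    (fun i => hdiag.re_trace_mul_proj_nonneg (hW (xs i)).1)
    (fun i => hdiag.sum_re_trace_mul_proj (hW (xs i)).2) hmean
    (by positivity : 0 < δ * √(Fintype.card X : ℝ))
  rw [trace_tensorPow_mul_typicalProj]
  simp only [hp_eq, ← Complex.ofReal_prod, ← Complex.ofReal_sum, Complex.ofReal_re]
  refine le_trans (sub_le_sub_left ?_ 1) hlaw
  rw [Fintype.card_fin, mul_pow, Real.sq_sqrt (by positivity)]
  calc (d : ℝ) / (δ ^ 2 * Fintype.card X) ≤ d / δ ^ 2 := by
        gcongr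
        exact le_mul_of_one_le_right (by positivity) ha
    _ ≤ Fintype.card X * d / δ ^ 2 := by
        gcongr
        exact le_mul_of_one_le_left (by positivity) ha

/-- **Lemma 5 (Weak law of large numbers).** For `x^n` of type `P`,
`Tr(W_{x^n} Π^n_{PW, δ√a}) ≥ 1 − ad/δ²`, where `Π^n_{PW, δ√a}` is the
variance-typical projector of the average state `PW` (with respect to a fixed
diagonalization) with constant `δ√a`. -/
theorem weak_law_of_large_numbers {X : Type} [Fintype X] {d : ℕ}
    (W : X → Mat d) (hW : ∀ x, IsState (W x)) (P : X → ℝ) (hP : IsProbDist P)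
    (q : Fin d → ℝ) (π : Fin d → Mat d) (hdiag : IsDiagonalization (avgState P W) q π)
    (n : ℕ) (hn : 0 < n) (xs : Fin n → X)
    (htype : ∀ x, (countIn x xs : ℝ) = n * P x)
    (δ : ℝ) (hδ : 0 < δ) :
    1 - (Fintype.card X : ℝ) * d / δ ^ 2
      ≤ (Matrix.trace (tensorPow (fun i => W (xs i)) *
          typicalProj n q π (δ * Real.sqrt (Fintype.card X)))).re :=
  weak_law_of_large_numbers_general W hW P q π hdiag n hn xs htype δ hδ
end
end

section
/- (Gentle measurement lemma) Let ρ be a density operator on a finite-dimensional complex Hilbert space, and X a positive semidefinite operator with X ≤ 1 (identity) and 1 − Tr(ρX) ≤ λ ≤ 1. Then ‖ρ − √X ρ √X‖₁ ≤ √(8λ), where √X is the positive semidefinite square root of X and ‖·‖₁ is the trace norm. -/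
open Matrix BigOperators Finset
open scoped Classical ComplexOrder

noncomputable section

/-- The positive semidefinite square root of a positive semidefinite matrix
(the definition `Matrix.PosSemidef.sqrt` of the older Mathlib, removed since). -/
def Matrix.PosSemidef.sqrt {n 𝕜 : Type*} [Fintype n] [RCLike 𝕜] [DecidableEq n]
    {A : Matrix n n 𝕜} (hA : A.PosSemidef) : Matrix n n 𝕜 :=
  hA.1.eigenvectorUnitary.1 * diagonal ((↑) ∘ Real.sqrt ∘ hA.1.eigenvalues) *
    (star hA.1.eigenvectorUnitary : Matrix n n 𝕜)


/-!
Write `S = √X`. Then `ρ - SρS = (1 - S)ρ + Sρ(1 - S)`. This difference is Hermitian, so its trace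
norm is `Re Tr((ρ - SρS) C)` for the Hermitian involution `C = sign(ρ - SρS)`. Cauchy–Schwarz for
the semi-inner product `(A, B) ↦ Tr(A ρ Bᴴ)` bounds each of the two resulting terms by
`√(Tr(ρ (1 - S)²))`, and `(1 - √x)² ≤ 1 - x` on `[0, 1]` gives `Tr(ρ (1 - S)²) ≤ 1 - Tr(ρX) ≤ λ`.
Hence `‖ρ - SρS‖₁ ≤ 2√λ ≤ √(8λ)`.
-/

open scoped MatrixOrder

namespace Matrix

lemma trace_mul_mul_conjTranspose {n R : Type*} [Fintype n] [CommRing R] [StarRing R]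
    (A M : Matrix n n R) : (A * M * Aᴴ).trace = (M * (Aᴴ * A)).trace := by
  rw [trace_mul_cycle, ← mul_assoc, trace_mul_comm, mul_assoc]

variable {n 𝕜 : Type*} [Fintype n] [RCLike 𝕜]

/-- Cauchy–Schwarz for the semi-inner product `(A, B) ↦ Tr(A M Bᴴ)` induced by `M`. -/
lemma PosSemidef.re_trace_mul_mul_conjTranspose_le {M : Matrix n n 𝕜} (hM : M.PosSemidef)
    (A B : Matrix n n 𝕜) :
    RCLike.re (A * M * Bᴴ).trace ≤
      √(RCLike.re (A * M * Aᴴ).trace) * √(RCLike.re (B * M * Bᴴ).trace) := by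
  let := M.toMatrixSeminormedAddCommGroup hM
  let := M.toMatrixInnerProductSpace hM
  have h := re_inner_le_norm (𝕜 := 𝕜) B A
  rwa [norm_eq_sqrt_re_inner (𝕜 := 𝕜) B, norm_eq_sqrt_re_inner (𝕜 := 𝕜) A, mul_comm] at h

variable [DecidableEq n]

lemma PosSemidef.re_trace_mul_le_of_le {M A B : Matrix n n 𝕜} (hM : M.PosSemidef) (hAB : A ≤ B) :
    RCLike.re (M * A).trace ≤ RCLike.re (M * B).trace := by
  obtain ⟨P, hP⟩ := CStarAlgebra.nonneg_iff_eq_star_mul_self.mp (sub_nonneg.mpr hAB)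
  have h := RCLike.nonneg_iff.mp (hM.mul_mul_conjTranspose_same P).trace_nonneg |>.1
  rwa [← sub_nonneg, ← map_sub, ← trace_sub, ← mul_sub, hP, star_eq_conjTranspose, ← mul_assoc,
    trace_mul_comm, ← mul_assoc]

lemma IsHermitian.trace_cfc {A : Matrix n n 𝕜} (hA : A.IsHermitian) (f : ℝ → ℝ) :
    (cfc f A).trace = ∑ i, (f (hA.eigenvalues i) : 𝕜) := by
  rw [hA.cfc_eq, IsHermitian.cfc, Unitary.conjStarAlgAut_apply, trace_mul_cycle,
    Unitary.coe_star_mul_self, one_mul, trace_diagonal]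
  rfl

lemma PosSemidef.sqrt_eq_cfcSqrt {A : Matrix n n 𝕜} (hA : A.PosSemidef) :
    hA.sqrt = CFC.sqrt A := by
  rw [CFC.sqrt_eq_real_sqrt A hA.nonneg, cfcₙ_eq_cfc (hf0 := Real.sqrt_zero), hA.1.cfc_eq]
  simp [IsHermitian.cfc, PosSemidef.sqrt, Unitary.conjStarAlgAut_apply]

lemma one_sub_cfcSqrt_sq_le {X : Matrix n n 𝕜} (hX₀ : 0 ≤ X) (hX₁ : X ≤ 1) :
    (1 - CFC.sqrt X) ^ 2 ≤ 1 - X := by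
  have hspec := (CFC.le_one_iff (R := ℝ) X).mp hX₁
  rw [CFC.sqrt_eq_real_sqrt X hX₀, cfcₙ_eq_cfc (hf0 := Real.sqrt_zero)]
  calc (1 - cfc Real.sqrt X) ^ 2 = cfc (fun x => (1 - √x) ^ 2) X := by
        rw [cfc_pow .., cfc_sub .., cfc_const_one ℝ X]
    _ ≤ cfc (fun x => 1 - x) X := cfc_mono fun x hx => by
        have hsq := Real.sq_sqrt (spectrum_nonneg_of_nonneg hX₀ hx)
        have hle := Real.sqrt_le_one.mpr (hspec x hx)
        nlinarith [Real.sqrt_nonneg x]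
    _ = 1 - X := by rw [cfc_sub .., cfc_const_one ℝ X, cfc_id' ℝ X]

lemma traceNorm_eq_re_trace_abs (A : Matrix n n ℂ) : traceNorm A = (CFC.abs A).trace.re := by
  have hAA := posSemidef_conjTranspose_mul_self A
  rw [CFC.abs, star_eq_conjTranspose, CFC.sqrt_eq_real_sqrt _ hAA.nonneg,
    cfcₙ_eq_cfc (hf0 := Real.sqrt_zero), hAA.1.trace_cfc, Complex.re_sum]
  simp [traceNorm]

lemma IsHermitian.exists_traceNorm_eq_re_trace_mul {D : Matrix n n ℂ} (hD : D.IsHermitian) :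
    ∃ C : Matrix n n ℂ, Cᴴ = C ∧ C * C = 1 ∧ traceNorm D = (D * C).trace.re := by
  -- `sign 0 = 1`, so that `sign ^ 2 = 1` everywhere
  let sign : ℝ → ℝ := fun x => if x < 0 then -1 else 1
  have hcont (f : ℝ → ℝ) : ContinuousOn f (spectrum ℝ D) := finite_real_spectrum.continuousOn f
  refine ⟨cfc sign D, cfc_predicate sign D, ?_, ?_⟩
  · rw [← cfc_mul sign sign D (hcont _) (hcont _), ← cfc_one ℝ D]
    refine cfc_congr fun x _ => ?_
    by_cases hx : x < 0 <;> simp [sign, hx]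
  · have hDC : D * cfc sign D = cfc (fun x => x * sign x) D := by
      rw [cfc_mul _ sign D (hcont _) (hcont _), cfc_id' ℝ D]
    rw [traceNorm_eq_re_trace_abs, CFC.abs_eq_cfc_norm D hD, hDC]
    refine congrArg _ (congrArg _ (cfc_congr fun x _ => ?_))
    by_cases hx : x < 0 <;> simp [sign, hx, abs_of_neg, abs_of_nonneg, not_lt.mp]

lemma PosSemidef.traceNorm_sub_mul_mul_le {ρ S : Matrix n n ℂ} (hρ : ρ.PosSemidef)
    (hS : S.IsHermitian) :
    traceNorm (ρ - S * ρ * S) ≤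
      (√ρ.trace.re + √(S * ρ * S).trace.re) * √((1 - S) * ρ * (1 - S)).trace.re := by
  set T := 1 - S
  have hT : Tᴴ = T := by simp [T, hS.eq]
  obtain ⟨C, hC, hCC, hnorm⟩ :=
    (show (ρ - S * ρ * S).IsHermitian by simp [IsHermitian, hS.eq, hρ.1.eq, mul_assoc])
      |>.exists_traceNorm_eq_re_trace_mul
  have hsplit : (ρ - S * ρ * S) * C = T * ρ * Cᴴ + S * ρ * (C * T)ᴴ := by
    rw [conjTranspose_mul, hC, hT]
    simp only [T]
    noncomm_ring
  have hρC : (C * ρ * Cᴴ).trace = ρ.trace := by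
    rw [trace_mul_mul_conjTranspose, hC, hCC, mul_one]
  have hρCT : ((C * T) * ρ * (C * T)ᴴ).trace = (T * ρ * Tᴴ).trace := by
    rw [trace_mul_mul_conjTranspose, conjTranspose_mul, hC, mul_assoc, ← mul_assoc C, hCC,
      one_mul, ← trace_mul_mul_conjTranspose]
  calc traceNorm (ρ - S * ρ * S)
      = (T * ρ * Cᴴ).trace.re + (S * ρ * (C * T)ᴴ).trace.re := by
        rw [hnorm, hsplit, trace_add, Complex.add_re]
    _ ≤ √(T * ρ * Tᴴ).trace.re * √(C * ρ * Cᴴ).trace.re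
          + √(S * ρ * Sᴴ).trace.re * √((C * T) * ρ * (C * T)ᴴ).trace.re :=
        add_le_add (hρ.re_trace_mul_mul_conjTranspose_le T C)
          (hρ.re_trace_mul_mul_conjTranspose_le S (C * T))
    _ = (√ρ.trace.re + √(S * ρ * S).trace.re) * √(T * ρ * T).trace.re := by
        rw [hρC, hρCT, hS.eq, hT]
        ring

end Matrix

theorem gentle_measurement_general {ι : Type} [Fintype ι] [DecidableEq ι]
    (ρ Xop : Matrix ι ι ℂ) (hρ : IsState ρ) (hX : Xop.PosSemidef)
    (hX1 : ((1 : Matrix ι ι ℂ) - Xop).PosSemidef) (lam : ℝ)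
    (h1 : 1 - (Matrix.trace (ρ * Xop)).re ≤ lam) :
    traceNorm (ρ - hX.sqrt * ρ * hX.sqrt) ≤ Real.sqrt (8 * lam) := by
  obtain ⟨hρ, hρ1⟩ := hρ
  have hXle : Xop ≤ 1 := sub_nonneg.mp hX1.nonneg
  rw [hX.sqrt_eq_cfcSqrt]
  set S := CFC.sqrt Xop
  refine (hρ.traceNorm_sub_mul_mul_le (CFC.sqrt_nonneg Xop).isSelfAdjoint).trans ?_
  have hSρS : (S * ρ * S).trace.re ≤ 1 := calc
    (S * ρ * S).trace.re = (ρ * Xop).trace.re := by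
      rw [trace_mul_cycle, CFC.sqrt_mul_sqrt_self Xop hX.nonneg, trace_mul_comm]
    _ ≤ (ρ * 1).trace.re := hρ.re_trace_mul_le_of_le hXle
    _ = 1 := by simp [hρ1]
  have hTρT : ((1 - S) * ρ * (1 - S)).trace.re ≤ lam := calc
    ((1 - S) * ρ * (1 - S)).trace.re = (ρ * (1 - S) ^ 2).trace.re := by
      rw [trace_mul_cycle, ← sq, trace_mul_comm]
    _ ≤ (ρ * (1 - Xop)).trace.re := hρ.re_trace_mul_le_of_le (one_sub_cfcSqrt_sq_le hX.nonneg hXle)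
    _ = 1 - (ρ * Xop).trace.re := by simp [mul_sub, trace_sub, hρ1]
    _ ≤ lam := h1
  calc (√ρ.trace.re + √(S * ρ * S).trace.re) * √((1 - S) * ρ * (1 - S)).trace.re
      ≤ (√1 + √1) * √lam := by rw [hρ1, Complex.one_re]; gcongr
    _ ≤ √(8 * lam) := by
        rw [Real.sqrt_mul (by norm_num : (0 : ℝ) ≤ 8), Real.sqrt_one]
        have : 2 ≤ √8 := Real.le_sqrt_of_sq_le (by norm_num)
        nlinarith [Real.sqrt_nonneg lam]

/-- **Lemma 8 (Gentle measurement).** If `ρ` is a state and `0 ≤ X ≤ 1` with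
`1 − Tr(ρX) ≤ λ ≤ 1`, then `‖ρ − √X ρ √X‖₁ ≤ √(8λ)`. -/
theorem gentle_measurement {ι : Type} [Fintype ι] [DecidableEq ι]
    (ρ Xop : Matrix ι ι ℂ) (hρ : IsState ρ) (hX : Xop.PosSemidef)
    (hX1 : ((1 : Matrix ι ι ℂ) - Xop).PosSemidef) (lam : ℝ)
    (h1 : 1 - (Matrix.trace (ρ * Xop)).re ≤ lam) (h2 : lam ≤ 1) :
    traceNorm (ρ - hX.sqrt * ρ * hX.sqrt) ≤ Real.sqrt (8 * lam) :=
  gentle_measurement_general ρ Xop hρ hX hX1 lam h1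
end
end
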